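/- arXiv:2012.08656 — 5 statements merged into one kernel-verified Lean document; each statement's English description precedes it below -/
import Mathlib

section
/- Let K be a field, let Q ∈ K with Q ≠ 0, let s ∈ ℕ, and let c_0, …, c_s ∈ K. Set P(x) := Σ_{j=0}^{s} c_j x^j. Then for every i with 0 ≤ i < s, P(Q^i) = Q^{−binom(i,2)} · (the coefficient of x^{s+i} in the polynomial product (Σ_{j=0}^{s} c_j Q^{−binom(j,2)} x^{s−j}) · (Σ_{ℓ=0}^{2s} Q^{binom(ℓ,2)} x^ℓ)). (Correctness of the chirp-transform algorithm for multipoint evaluation on a geometric progression.) -/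
/-!
Bluestein's identity `i * j = C(i+j, 2) - C(i, 2) - C(j, 2)` turns each power `(Q ^ i) ^ j` into
`Q^{-C(i,2)} Q^{-C(j,2)} Q^{C(i+j,2)}`, so `P(Q^i)` is `Q^{-C(i,2)}` times a correlation
`∑ⱼ aⱼ b_{i+j}` of the sequences `aⱼ = cⱼ Q^{-C(j,2)}` and `bₗ = Q^{C(l,2)}`. Reversing the first
sequence turns that correlation into the coefficient of `x^{s+i}` of a product of polynomials.
-/

open Polynomial Finset

theorem Nat.choose_two_add (i j : ℕ) :
    (i + j).choose 2 = i.choose 2 + j.choose 2 + i * j := by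
  induction j with
  | zero => simp
  | succ j ih =>
    rw [← add_assoc, Nat.choose_succ_succ', Nat.choose_succ_succ', ih]
    simp only [Nat.choose_one_right]
    ring

theorem pow_choose_two_add {M : Type*} [CommMonoid M] (q : M) (i j : ℕ) :
    q ^ (i + j).choose 2 = q ^ i.choose 2 * q ^ j.choose 2 * (q ^ i) ^ j := by
  rw [Nat.choose_two_add, pow_add, pow_add, pow_mul]

theorem pow_pow_eq_inv_pow_choose_two_mul {G₀ : Type*} [CommGroupWithZero G₀] {q : G₀}
    (hq : q ≠ 0) (i j : ℕ) :
    (q ^ i) ^ j = q⁻¹ ^ i.choose 2 * (q⁻¹ ^ j.choose 2 * q ^ (i + j).choose 2) := by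
  rw [pow_choose_two_add, inv_pow, inv_pow]
  field_simp

theorem coeff_reverse_mul_sum {R : Type*} [Semiring R] (a b : ℕ → R) {s i N : ℕ}
    (hN : s + i < N) :
    ((∑ j ∈ range (s + 1), C (a j) * X ^ (s - j)) *
        (∑ l ∈ range N, C (b l) * X ^ l)).coeff (s + i) =
      ∑ j ∈ range (s + 1), a j * b (i + j) := by
  rw [sum_mul_sum, finsetSum_coeff]
  refine sum_congr rfl fun j hj => ?_
  have hj : j ≤ s := Nat.lt_succ_iff.mp (mem_range.mp hj)
  simp_rw [finsetSum_coeff, C_mul_X_pow_eq_monomial, monomial_mul_monomial, coeff_monomial]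
  rw [sum_eq_single_of_mem (i + j) (mem_range.mpr (by omega)), if_pos (by omega)]
  intro l _ hl
  exact if_neg (by omega)

/-- Correctness of the chirp-transform algorithm for multipoint evaluation on a
geometric progression: for `P(x) = Σ_{j=0}^{s} c_j x^j` and `Q ≠ 0`, for every
`0 ≤ i < s`, the value `P(Q^i)` equals `Q^{-binom(i,2)}` times the coefficient of
`x^{s+i}` in the product
`(Σ_{j=0}^{s} c_j Q^{-binom(j,2)} x^{s-j}) · (Σ_{ℓ=0}^{2s} Q^{binom(ℓ,2)} x^ℓ)`. -/
theorem chirp_transform_correct {K : Type*} [Field K] (Q : K) (hQ : Q ≠ 0) (s : ℕ)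
    (c : ℕ → K) :
    ∀ i < s,
      (∑ j ∈ Finset.range (s + 1), c j * (Q ^ i) ^ j) =
        Q⁻¹ ^ (Nat.choose i 2) *
          (((∑ j ∈ Finset.range (s + 1),
                Polynomial.C (c j * Q⁻¹ ^ (Nat.choose j 2)) * Polynomial.X ^ (s - j)) *
              (∑ l ∈ Finset.range (2 * s + 1),
                Polynomial.C (Q ^ (Nat.choose l 2)) * Polynomial.X ^ l)).coeff (s + i)) := by
  intro i hi
  rw [coeff_reverse_mul_sum _ _ (by omega), mul_sum]
  refine sum_congr rfl fun j _ => ?_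
  rw [pow_pow_eq_inv_pow_choose_two_mul hQ]
  ring
end

section
/- Let K be a commutative ring, let p, r, t ∈ K and let s ∈ ℕ. Define P(y) := Σ_{j=0}^{s−1} p^j r^j t^{binom(j,2)} y^j. Then Σ_{n=0}^{s²−1} p^n r^n t^{binom(n,2)} = Σ_{k=0}^{s−1} p^{sk} r^{sk} t^{binom(sk,2)} · P(t^{sk}). (This is the baby-step/giant-step decomposition underlying the Nogneng–Schost algorithm: for q with integer exponents 2a and a+b, taking r = q^{a+b} and t = q^{2a} gives p^n q^{an²+bn} = p^n r^n t^{binom(n,2)}, since an²+bn = (a+b)n + 2a·binom(n,2).) -/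
/-!
Split `n < s²` as `n = s k + j` with `j, k < s`. Since `binom(sk + j, 2) = binom(sk, 2) + binom(j, 2) + sk·j`,
the term of index `n` factors as the term of index `sk` times the term of index `j` times `(t^{sk})^j`.
-/

open Finset

theorem Nat.add_choose_two (a b : ℕ) : (a + b).choose 2 = a.choose 2 + b.choose 2 + a * b := by
  induction b with
  | zero => simp
  | succ b ih =>
    rw [← Nat.add_assoc, Nat.choose_succ_succ' (a + b) 1, Nat.choose_succ_succ' b 1, ih]
    simp only [Nat.choose_one_right]
    ring

theorem Finset.sum_range_mul_eq_sum_sum {M : Type*} [AddCommMonoid M] (f : ℕ → M) (s m : ℕ) :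
    ∑ n ∈ range (s * m), f n = ∑ k ∈ range m, ∑ j ∈ range s, f (s * k + j) := by
  induction m with
  | zero => simp
  | succ m ih => rw [Nat.mul_succ, sum_range_add, ih, sum_range_succ]

/-- The baby-step/giant-step decomposition underlying the Nogneng–Schost
algorithm: with `P(y) = Σ_{j=0}^{s-1} p^j r^j t^{binom(j,2)} y^j`, one has
`Σ_{n=0}^{s²-1} p^n r^n t^{binom(n,2)} = Σ_{k=0}^{s-1} p^{sk} r^{sk} t^{binom(sk,2)} · P(t^{sk})`. -/
theorem nogneng_schost_decomposition {K : Type*} [CommRing K] (p r t : K) (s : ℕ) :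
    (∑ n ∈ Finset.range (s ^ 2), p ^ n * r ^ n * t ^ (Nat.choose n 2)) =
      ∑ k ∈ Finset.range s,
        p ^ (s * k) * r ^ (s * k) * t ^ (Nat.choose (s * k) 2) *
          (∑ j ∈ Finset.range s,
            p ^ j * r ^ j * t ^ (Nat.choose j 2) * (t ^ (s * k)) ^ j) := by
  rw [sq, sum_range_mul_eq_sum_sum]
  refine sum_congr rfl fun k _ => ?_
  rw [mul_sum]
  refine sum_congr rfl fun j _ => ?_
  rw [Nat.add_choose_two, pow_add, pow_add, pow_add, pow_add, ← pow_mul]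
  ring
end

section
/- Let K be a commutative ring, let p, q ∈ K, let A, B ∈ ℕ, and for x ∈ K define the 2×2 matrices M(x) := [[p·q^B·x^A + 1, −p·q^B·x^A], [1, 0]] and M̃(x) := [[p·q^B·x + 1, −p·q^B·x], [1, 0]], and set q̃ := q^A. Then for every N ∈ ℕ the matrix q-factorials coincide: M(q^{N−1})·M(q^{N−2})⋯M(q)·M(1) = M̃(q̃^{N−1})·M̃(q̃^{N−2})⋯M̃(q̃)·M̃(1). (Correctness of the precomputation trick of Algorithm 4, with A playing the role of 2a and B the role of a+b.) -/
/-- Correctness of the precomputation trick of Algorithm 4 (with `A` playing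
the role of `2a` and `B` the role of `a+b`): with
`M(x) = [[p·q^B·x^A + 1, -p·q^B·x^A], [1, 0]]`,
`M̃(x) = [[p·q^B·x + 1, -p·q^B·x], [1, 0]]` and `q̃ := q^A`, for every `N` the
matrix `q`-factorials coincide:
`M(q^{N-1})⋯M(q)·M(1) = M̃(q̃^{N-1})⋯M̃(q̃)·M̃(1)`. -/
theorem algorithm4_precomputation_correct {K : Type*} [CommRing K] (p q : K)
    (A B : ℕ) (N : ℕ) :
    ((List.range N).reverse.map fun k =>
        !![p * q ^ B * (q ^ k) ^ A + 1, -(p * q ^ B * (q ^ k) ^ A); 1, 0]).prod =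
      ((List.range N).reverse.map fun k =>
        !![p * q ^ B * ((q ^ A) ^ k) + 1, -(p * q ^ B * ((q ^ A) ^ k)); 1, 0]).prod := by
  simp_rw [pow_right_comm q _ A]
end

section
/- Let K be a commutative ring, let p, r, t ∈ K, and for x ∈ K define the 2×2 matrix M(x) := [[p·r·x + 1, −p·r·x], [1, 0]]. Then for every N ≥ 1, the (2,1) entry (second row, first column) of the ordered matrix product M(t^{N−1})·M(t^{N−2})⋯M(t)·M(1) equals the sum v_N := Σ_{n=0}^{N−1} p^n r^n t^{binom(n,2)}; equivalently, v_N = (0 1)·M(t^{N−1})⋯M(1)·(1, 0)ᵀ. (This is the matrix-product expression for the sparse sums of Section 2.2: for q with integer exponents 2a and a+b, taking r = q^{a+b} and t = q^{2a} gives v_N = Σ_{n=0}^{N−1} p^n q^{an²+bn}.) -/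
/-!
With `a n = p^n r^n t^(n choose 2)` the ratio `a (n+1) / a n` is `c n = p r t^n`, and the matrix
`[[c + 1, -c], [1, 0]]` advances a pair of consecutive partial sums `(s (n+1), s n)` of a sequence
with `a (n+1) = c * a n` to `(s (n+2), s (n+1))`. Applying the product to `(1, 0) = (s 1, s 0)`
therefore gives `(s (N+1), s N)`, whose second coordinate is the `(2,1)` entry.
-/

open Finset Matrix

theorem mulVec_partialSums_succ {K : Type*} [CommRing K] (a : ℕ → K) (c : K) (n : ℕ)
    (ha : a (n + 1) = c * a n) :
    !![c + 1, -c; 1, 0] *ᵥ ![∑ k ∈ range (n + 1), a k, ∑ k ∈ range n, a k] =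
      ![∑ k ∈ range (n + 2), a k, ∑ k ∈ range (n + 1), a k] := by
  ext i
  fin_cases i
  · simp only [mulVec, dotProduct, Fin.zero_eta, Fin.isValue, of_apply, cons_val', cons_val_fin_one,
      cons_val_zero, sum_range_succ _ n, Fin.sum_univ_two, cons_val_one, neg_mul,
      sum_range_succ _ (n + 1), ha]
    ring
  · simp [mulVec, dotProduct, Fin.sum_univ_two]

theorem prod_mulVec_partialSums {K : Type*} [CommRing K] (a c : ℕ → K)
    (ha : ∀ n, a (n + 1) = c n * a n) (N : ℕ) :
    ((List.range N).reverse.map fun k => !![c k + 1, -c k; 1, 0]).prod *ᵥ ![a 0, 0] =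
      ![∑ k ∈ range (N + 1), a k, ∑ k ∈ range N, a k] := by
  induction N with
  | zero => simp
  | succ N ih =>
    rw [List.range_succ, List.reverse_append, List.reverse_singleton, List.singleton_append,
      List.map_cons, List.prod_cons, ← mulVec_mulVec, ih]
    exact mulVec_partialSums_succ a (c N) N (ha N)

theorem sparse_sum_as_matrix_entry_general {K : Type*} [CommRing K] (p r t : K) (N : ℕ) :
    (((List.range N).reverse.map fun k =>
        !![p * r * t ^ k + 1, -(p * r * t ^ k); 1, 0]).prod) 1 0 =
      ∑ n ∈ Finset.range N, p ^ n * r ^ n * t ^ (Nat.choose n 2) := by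
  have hratio : ∀ n, p ^ (n + 1) * r ^ (n + 1) * t ^ (n + 1).choose 2 =
      p * r * t ^ n * (p ^ n * r ^ n * t ^ n.choose 2) := fun n => by
    rw [Nat.choose_succ_succ', Nat.choose_one_right, pow_add]
    ring
  have hsums := congrFun (prod_mulVec_partialSums (fun n => p ^ n * r ^ n * t ^ n.choose 2)
    (fun n => p * r * t ^ n) hratio N) 1
  simpa [mulVec, dotProduct, Fin.sum_univ_two] using hsums

/-- The matrix-product expression for the sparse sums of Section 2.2: with
`M(x) = [[p·r·x + 1, -p·r·x], [1, 0]]`, for every `N ≥ 1` the `(2,1)` entry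
(second row, first column) of the ordered product `M(t^{N-1})⋯M(t)·M(1)` equals
`v_N = Σ_{n=0}^{N-1} p^n r^n t^{binom(n,2)}`. -/
theorem sparse_sum_as_matrix_entry {K : Type*} [CommRing K] (p r t : K) (N : ℕ)
    (hN : 1 ≤ N) :
    (((List.range N).reverse.map fun k =>
        !![p * r * t ^ k + 1, -(p * r * t ^ k); 1, 0]).prod) 1 0 =
      ∑ n ∈ Finset.range N, p ^ n * r ^ n * t ^ (Nat.choose n 2) :=
  sparse_sum_as_matrix_entry_general p r t N
end

section
/- Let K be a field, let q ∈ K and let m, n ∈ ℕ be such that the q-brackets [i]_q are nonzero for all 1 ≤ i ≤ m+n, and define the Gaussian binomial coefficients binom(a,b)_q := [a]_q!/([b]_q!·[a−b]_q!) for 0 ≤ b ≤ a ≤ m+n (with binom(a,b)_q := 0 when b > a). Then the q-Chu–Vandermonde identity holds: Σ_{k=0}^{n} q^{k²} · binom(m,k)_q · binom(n,k)_q = binom(m+n,n)_q. (This is identity (2) of the paper, used in Corollary 1.) -/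
/-- The `q`-bracket `[a]_q = 1 + q + ⋯ + q^{a-1}`. -/
def qBracket {K : Type*} [CommRing K] (q : K) (a : ℕ) : K :=
  ∑ i ∈ Finset.range a, q ^ i

/-- The `q`-factorial `[a]_q! = ∏_{k=1}^{a} [k]_q`. -/
def qFactorial {K : Type*} [CommRing K] (q : K) (a : ℕ) : K :=
  ∏ k ∈ Finset.range a, qBracket q (k + 1)

/-- The Gaussian binomial coefficient `binom(a,b)_q = [a]_q!/([b]_q!·[a-b]_q!)`
for `b ≤ a`, and `0` for `b > a`. -/
noncomputable def qBinom {K : Type*} [Field K] (q : K) (a b : ℕ) : K :=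
  if b ≤ a then qFactorial q a / (qFactorial q b * qFactorial q (a - b)) else 0

/-!
Whenever `[m+n]_q! ≠ 0` all the factorials involved are invertible, and the Gaussian binomials
satisfy both q-Pascal rules
`binom(a+1,b+1) = binom(a,b) + q^(b+1) binom(a,b+1) = q^(a-b) binom(a,b) + binom(a,b+1)`,
each coming from a splitting `[a+1] = [c] + q^c [a+1-c]` of the q-bracket.
The identity is proved with a shift `r`,
`Σ_j q^(j(j+r)) binom(m,j+r) binom(n,j) = binom(m+n,n+r)`, by induction on `n` for all `r` at once:
the second rule applied to `binom(n+1,j)` splits the sum into the instances `r` and `r+1` for `n`,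
which the first rule recombines into `binom(m+n+1,n+1+r)`.
-/

open Finset

section CommRing

variable {K : Type*} [CommRing K] (q : K)

theorem qBracket_add (c d : ℕ) : qBracket q (c + d) = qBracket q c + q ^ c * qBracket q d := by
  simp only [qBracket, sum_range_add, mul_sum, pow_add]

@[simp]
theorem qFactorial_zero : qFactorial q 0 = 1 := rfl

theorem qFactorial_succ (a : ℕ) : qFactorial q (a + 1) = qFactorial q a * qBracket q (a + 1) :=
  prod_range_succ _ _

theorem qFactorial_dvd_qFactorial {a b : ℕ} (hab : b ≤ a) : qFactorial q b ∣ qFactorial q a :=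
  prod_dvd_prod_of_subset _ _ _ (range_subset_range.mpr hab)

theorem qBracket_dvd_qFactorial {a i : ℕ} (hi : 1 ≤ i) (hia : i ≤ a) :
    qBracket q i ∣ qFactorial q a := by
  obtain ⟨k, rfl⟩ := Nat.exists_eq_add_of_le' hi
  exact (dvd_mul_left _ _).trans ((qFactorial_succ q k) ▸ qFactorial_dvd_qFactorial q hia)

theorem qFactorial_ne_zero_of_le {a b : ℕ} (hab : b ≤ a) (ha : qFactorial q a ≠ 0) :
    qFactorial q b ≠ 0 :=
  ne_zero_of_dvd_ne_zero ha (qFactorial_dvd_qFactorial q hab)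

theorem qBracket_ne_zero_of_le {a i : ℕ} (hi : 1 ≤ i) (hia : i ≤ a)
    (ha : qFactorial q a ≠ 0) : qBracket q i ≠ 0 :=
  ne_zero_of_dvd_ne_zero ha (qBracket_dvd_qFactorial q hi hia)

theorem qFactorial_ne_zero [IsDomain K] {a : ℕ}
    (h : ∀ i, 1 ≤ i → i ≤ a → qBracket q i ≠ 0) : qFactorial q a ≠ 0 :=
  prod_ne_zero_iff.mpr fun k hk => h (k + 1) k.succ_pos (mem_range.mp hk)

end CommRing

section Field

variable {K : Type*} [Field K] (q : K)

theorem qBinom_of_lt {a b : ℕ} (hab : a < b) : qBinom q a b = 0 :=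
  if_neg (Nat.not_le.mpr hab)

theorem qBinom_zero_right {a : ℕ} (ha : qFactorial q a ≠ 0) : qBinom q a 0 = 1 := by
  simp [qBinom, ha]

theorem qBinom_succ_succ_mul_qBracket {a : ℕ} (ha : qFactorial q (a + 1) ≠ 0) (b : ℕ) :
    qBinom q (a + 1) (b + 1) * qBracket q (b + 1) = qBinom q a b * qBracket q (a + 1) := by
  rcases le_or_gt b a with hba | hab
  · have hb : qFactorial q b ≠ 0 := qFactorial_ne_zero_of_le q (by omega) ha
    have hab : qFactorial q (a - b) ≠ 0 := qFactorial_ne_zero_of_le q (by omega) ha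
    have hb1 : qBracket q (b + 1) ≠ 0 := qBracket_ne_zero_of_le q b.succ_pos (by omega) ha
    rw [qBinom, qBinom, if_pos (by omega), if_pos hba, Nat.add_sub_add_right,
      qFactorial_succ q a, qFactorial_succ q b]
    field_simp
  · rw [qBinom_of_lt q (by omega), qBinom_of_lt q hab, zero_mul, zero_mul]

theorem qBinom_succ_mul_qBracket {a : ℕ} (ha : qFactorial q a ≠ 0) (b : ℕ) :
    qBinom q a (b + 1) * qBracket q (b + 1) = qBinom q a b * qBracket q (a - b) := by
  rcases lt_trichotomy b a with hba | rfl | hab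
  · have hb : qFactorial q b ≠ 0 := qFactorial_ne_zero_of_le q (by omega) ha
    have hab : qFactorial q (a - (b + 1)) ≠ 0 := qFactorial_ne_zero_of_le q (by omega) ha
    have hb1 : qBracket q (b + 1) ≠ 0 := qBracket_ne_zero_of_le q b.succ_pos hba ha
    have hab1 : qBracket q (a - (b + 1) + 1) ≠ 0 :=
      qBracket_ne_zero_of_le q (by omega) (by omega) ha
    rw [qBinom, qBinom, if_pos (show b + 1 ≤ a from hba), if_pos hba.le,
      show a - b = a - (b + 1) + 1 by omega, qFactorial_succ q b, qFactorial_succ q (a - (b + 1))]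
    field_simp
  · rw [qBinom_of_lt q b.lt_succ_self, Nat.sub_self]
    simp [qBracket]
  · rw [qBinom_of_lt q (by omega), qBinom_of_lt q hab, zero_mul, zero_mul]

theorem qBinom_succ_succ {a : ℕ} (ha : qFactorial q (a + 1) ≠ 0) (b : ℕ) :
    qBinom q (a + 1) (b + 1) = qBinom q a b + q ^ (b + 1) * qBinom q a (b + 1) := by
  rcases le_or_gt b a with hba | hab
  · have hb1 : qBracket q (b + 1) ≠ 0 := qBracket_ne_zero_of_le q b.succ_pos (by omega) ha
    have ha' : qFactorial q a ≠ 0 := qFactorial_ne_zero_of_le q a.le_succ ha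
    have hsplit : qBracket q (a + 1) = qBracket q (b + 1) + q ^ (b + 1) * qBracket q (a - b) := by
      rw [← qBracket_add, show b + 1 + (a - b) = a + 1 by omega]
    apply mul_right_cancel₀ hb1
    linear_combination qBinom_succ_succ_mul_qBracket q ha b + qBinom q a b * hsplit -
      q ^ (b + 1) * qBinom_succ_mul_qBracket q ha' b
  · rw [qBinom_of_lt q (by omega), qBinom_of_lt q hab, qBinom_of_lt q (by omega)]
    ring

theorem qBinom_succ_succ' {a : ℕ} (ha : qFactorial q (a + 1) ≠ 0) (b : ℕ) :
    qBinom q (a + 1) (b + 1) = q ^ (a - b) * qBinom q a b + qBinom q a (b + 1) := by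
  rcases le_or_gt b a with hba | hab
  · have hb1 : qBracket q (b + 1) ≠ 0 := qBracket_ne_zero_of_le q b.succ_pos (by omega) ha
    have ha' : qFactorial q a ≠ 0 := qFactorial_ne_zero_of_le q a.le_succ ha
    have hsplit : qBracket q (a + 1) = qBracket q (a - b) + q ^ (a - b) * qBracket q (b + 1) := by
      rw [← qBracket_add, show a - b + (b + 1) = a + 1 by omega]
    apply mul_right_cancel₀ hb1
    linear_combination qBinom_succ_succ_mul_qBracket q ha b + qBinom q a b * hsplit -
      qBinom_succ_mul_qBracket q ha' b
  · rw [qBinom_of_lt q (by omega), qBinom_of_lt q hab, qBinom_of_lt q (by omega)]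
    ring

theorem sum_pow_mul_qBinom_mul_qBinom (m n : ℕ) (hmn : qFactorial q (m + n) ≠ 0) (r : ℕ) :
    ∑ j ∈ range (n + 1), q ^ (j * (j + r)) * qBinom q m (j + r) * qBinom q n j =
      qBinom q (m + n) (n + r) := by
  induction n generalizing r with
  | zero => simp [qBinom_zero_right q (a := 0) (by simp)]
  | succ n ih =>
    have hmn' : qFactorial q (m + n) ≠ 0 := qFactorial_ne_zero_of_le q (by omega) hmn
    have hn : qFactorial q (n + 1) ≠ 0 := qFactorial_ne_zero_of_le q (by omega) hmn
    have hterm : ∀ i ∈ range (n + 1),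
        q ^ ((i + 1) * (i + 1 + r)) * qBinom q m (i + 1 + r) * qBinom q (n + 1) (i + 1) =
          q ^ ((i + 1) * (i + 1 + r)) * qBinom q m (i + 1 + r) * qBinom q n (i + 1) +
            q ^ (n + r + 1) *
              (q ^ (i * (i + (r + 1))) * qBinom q m (i + (r + 1)) * qBinom q n i) := by
      intro i hi
      obtain ⟨d, rfl⟩ := Nat.exists_eq_add_of_le (Nat.lt_succ_iff.mp (mem_range.mp hi))
      rw [qBinom_succ_succ' q hn, Nat.add_sub_cancel_left, show i + (r + 1) = i + 1 + r by omega]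
      ring
    calc ∑ j ∈ range (n + 1 + 1), q ^ (j * (j + r)) * qBinom q m (j + r) * qBinom q (n + 1) j
        = ∑ j ∈ range (n + 1 + 1), q ^ (j * (j + r)) * qBinom q m (j + r) * qBinom q n j +
            q ^ (n + r + 1) * qBinom q (m + n) (n + (r + 1)) := by
          rw [sum_range_succ', sum_congr rfl hterm, sum_add_distrib, ← mul_sum, ih hmn' (r + 1),
            sum_range_succ' _ (n + 1), qBinom_zero_right q hn, qBinom_zero_right q
              (qFactorial_ne_zero_of_le q n.le_succ hn)]
          ring
      _ = qBinom q (m + n) (n + r) + q ^ (n + r + 1) * qBinom q (m + n) (n + r + 1) := by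
          rw [sum_range_succ, ih hmn' r, qBinom_of_lt q n.lt_succ_self, mul_zero, add_zero,
            add_assoc]
      _ = qBinom q (m + (n + 1)) (n + 1 + r) := by
          rw [← add_assoc, show n + 1 + r = n + r + 1 by omega,
            qBinom_succ_succ q (by rwa [← add_assoc] at hmn)]

end Field

/-- The `q`-Chu–Vandermonde identity (identity (2) of the paper): if `[i]_q ≠ 0`
for `1 ≤ i ≤ m+n`, then `Σ_{k=0}^{n} q^{k²}·binom(m,k)_q·binom(n,k)_q = binom(m+n,n)_q`. -/
theorem q_chu_vandermonde {K : Type*} [Field K] (q : K) (m n : ℕ)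
    (h : ∀ i, 1 ≤ i → i ≤ m + n → qBracket q i ≠ 0) :
    (∑ k ∈ Finset.range (n + 1), q ^ (k ^ 2) * qBinom q m k * qBinom q n k) =
      qBinom q (m + n) n := by
  simpa [sq] using sum_pow_mul_qBinom_mul_qBinom q m n (qFactorial_ne_zero q h) 0
end
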